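/- arXiv:2005.11790 — 3 statements merged into one kernel-verified Lean document; each statement's English description precedes it below -/
import Mathlib

section
/- Let t > 0, let E ⊂ ℝⁿ be a Borel set, and let P : ℝⁿ → ℝᵐ be an orthogonal projection. If H^t(E ∩ P⁻¹{u}) = 0 for every u ∈ ℝᵐ, then for every μ ∈ M(E), for μ-almost all x ∈ E one has limsup_{r→0} liminf_{δ→0} r^{-t} δ^{-m} μ({y ∈ E ∩ B(x,r) : |P(y − x)| ≤ δ}) = ∞. -/
/-!
Suppose the limsup–liminf were finite on a set `A ⊆ E` of positive `μ`-measure. Disintegrate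
`μ|A` along `P`: for `η = P₊(μ|A)`-typical `u`, the conditional measure `σ_u` lives on the fibre
`A ∩ P⁻¹{u}`, and by differentiation with respect to `η`,
`σ_u(B(x, r)) = lim_δ μ(A ∩ P⁻¹B(u, δ) ∩ B(x, r)) / η(B(u, δ))`. For `x` in the fibre the
numerator is a tube mass, frequently `≲ r^t δ^m`, while `η(B(u, δ)) ≳ δ^m` at `η`-typical `u`.
Hence `σ_u(B(x, r)) ≲ r^t`, and the mass distribution principle gives the fibre positive
`H^t`-measure, against the hypothesis.
-/

open MeasureTheory Metric Filter ProbabilityTheory Module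
open scoped ENNReal Topology

/-- `P : ℝⁿ → ℝᵐ` is an orthogonal projection: a surjective linear map whose restriction to
the orthogonal complement of its kernel is an isometry. -/
def IsOrthoProj {E F : Type*} [NormedAddCommGroup E] [InnerProductSpace ℝ E]
    [NormedAddCommGroup F] [InnerProductSpace ℝ F] (P : E →ₗ[ℝ] F) : Prop :=
  Function.Surjective P ∧ ∀ x ∈ (LinearMap.ker P)ᗮ, ‖P x‖ = ‖x‖

section LowerDensity

variable {Y : Type*} [NormedAddCommGroup Y] [NormedSpace ℝ Y] [FiniteDimensional ℝ Y]
  [MeasurableSpace Y] [BorelSpace Y]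

theorem ae_exists_pos_mul_le_measure_closedBall (η : Measure Y) [IsFiniteMeasure η] :
    ∀ᵐ u ∂η, ∃ c : ℝ≥0∞, 0 < c ∧
      ∀ᶠ δ in 𝓝[>] (0 : ℝ), c * ENNReal.ofReal (δ ^ finrank ℝ Y) ≤ η (closedBall u δ) := by
  -- `vol(B(u, δ)) / η(B(u, δ))` tends to `∂vol/∂η`, which is finite `η`-a.e.
  let vol : Measure Y := Measure.addHaar
  filter_upwards [Besicovitch.ae_tendsto_rnDeriv vol η, Measure.rnDeriv_lt_top vol η]
    with u hlim hfin
  set M := vol.rnDeriv η u + 1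
  have hM0 : M ≠ 0 := by simp [M]
  have hMtop : M ≠ ∞ := by simp [M, hfin.ne]
  refine ⟨vol (ball 0 1) / M, ENNReal.div_pos (measure_ball_pos vol 0 one_pos).ne' hMtop, ?_⟩
  filter_upwards [hlim.eventually (gt_mem_nhds (ENNReal.lt_add_right hfin.ne one_ne_zero)),
    self_mem_nhdsWithin] with δ hδ (hδ0 : 0 < δ)
  rw [ENNReal.div_lt_iff (Or.inr (measure_closedBall_pos vol u hδ0).ne')
    (Or.inr measure_closedBall_lt_top.ne)] at hδ
  calc vol (ball 0 1) / M * ENNReal.ofReal (δ ^ finrank ℝ Y)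
      = vol (closedBall u δ) / M := by
        rw [Measure.addHaar_closedBall vol u hδ0.le, mul_comm, mul_div_assoc]
    _ ≤ η (closedBall u δ) := ENNReal.div_le_of_le_mul' hδ.le

end LowerDensity

section MassDistribution

variable {X : Type*} [MetricSpace X] [MeasurableSpace X] [BorelSpace X]

/-- The mass distribution principle. -/
theorem inv_smul_restrict_le_hausdorffMeasure {σ : Measure X} {S : Set X} (hS : MeasurableSet S)
    {t : ℝ} (ht : 0 < t) {C : ℝ≥0∞} (hC : C ≠ ∞) {r₀ : ℝ} (hr₀ : 0 < r₀)
    (hball : ∀ x ∈ S, ∀ r, 0 < r → r ≤ r₀ → σ (closedBall x r) ≤ C * ENNReal.ofReal (r ^ t)) :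
    C⁻¹ • σ.restrict S ≤ μH[t] := by
  have hball₀ : ∀ x ∈ S, ∀ r, 0 ≤ r → r ≤ r₀ →
      σ (closedBall x r) ≤ C * ENNReal.ofReal (r ^ t) := by
    intro x hx r hr0 hr
    rcases hr0.lt_or_eq with hr0 | rfl
    · exact hball x hx r hr0 hr
    have hlim : Tendsto (fun r : ℝ => C * ENNReal.ofReal (r ^ t)) (𝓝[>] 0)
        (𝓝 (C * ENNReal.ofReal (0 ^ t))) :=
      ENNReal.Tendsto.const_mul (ENNReal.tendsto_ofReal
        ((Real.continuousAt_rpow_const 0 t (Or.inr ht.le)).tendsto.mono_left nhdsWithin_le_nhds))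
        (Or.inr hC)
    refine ge_of_tendsto hlim ?_
    filter_upwards [Ioc_mem_nhdsGT hr₀] with r hr
    exact (measure_mono (closedBall_subset_closedBall hr.1.le)).trans (hball x hx r hr.1 hr.2)
  refine Measure.le_hausdorffMeasure t _ (ENNReal.ofReal r₀) (ENNReal.ofReal_pos.2 hr₀)
    fun s hs => ?_
  rw [Measure.smul_apply, smul_eq_mul, Measure.restrict_apply' hS]
  rcases (s ∩ S).eq_empty_or_nonempty with h | ⟨x, hxs, hxS⟩
  · simp [h]
  have hdiam : ediam s ≠ ∞ := (hs.trans_lt ENNReal.ofReal_lt_top).ne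
  set d := (ediam s).toReal
  have hsub : s ∩ S ⊆ closedBall x d := fun y hy => by
    rw [mem_closedBall, dist_edist]
    exact ENNReal.toReal_mono hdiam (edist_le_ediam_of_mem hy.1 hxs)
  calc C⁻¹ * σ (s ∩ S) ≤ C⁻¹ * (C * ENNReal.ofReal (d ^ t)) := by
        gcongr
        exact (measure_mono hsub).trans (hball₀ x hxS d ENNReal.toReal_nonneg
          (ENNReal.toReal_le_of_le_ofReal hr₀.le hs))
    _ ≤ ENNReal.ofReal (d ^ t) := by
        rw [← mul_assoc]
        exact mul_le_of_le_one_left' (ENNReal.inv_mul_le_one C)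
    _ = ediam s ^ t := by
        rw [← ENNReal.ofReal_rpow_of_nonneg ENNReal.toReal_nonneg ht.le,
          ENNReal.ofReal_toReal hdiam]

theorem measure_eq_zero_of_hausdorffMeasure_eq_zero {σ : Measure X} {S : Set X}
    (hS : MeasurableSet S) {t : ℝ} (ht : 0 < t) {C : ℝ≥0∞} (hC : C ≠ ∞) {r₀ : ℝ} (hr₀ : 0 < r₀)
    (hball : ∀ x ∈ S, ∀ r, 0 < r → r ≤ r₀ → σ (closedBall x r) ≤ C * ENNReal.ofReal (r ^ t))
    (hSt : μH[t] S = 0) : σ S = 0 := by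
  have hmass := Measure.le_iff'.1 (inv_smul_restrict_le_hausdorffMeasure hS ht hC hr₀ hball) S
  rw [Measure.smul_apply, Measure.restrict_apply_self, smul_eq_mul, hSt] at hmass
  exact (mul_eq_zero.1 (le_antisymm hmass zero_le)).resolve_left (ENNReal.inv_ne_zero.2 hC)

end MassDistribution

section Disintegration

variable {X Y : Type*} [MeasurableSpace X] [StandardBorelSpace X] [Nonempty X] [MeasurableSpace Y]
  {f : X → Y} (ν : Measure X) [IsFiniteMeasure ν]

theorem setLIntegral_condDistrib_id (hf : Measurable f) {s : Set Y} {w : Set X}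
    (hs : MeasurableSet s) (hw : MeasurableSet w) :
    ∫⁻ u in s, condDistrib id f ν u w ∂ν.map f = ν (f ⁻¹' s ∩ w) := by
  rw [← Measure.compProd_apply_prod hs hw, compProd_map_condDistrib aemeasurable_id,
    Measure.map_apply (hf.prodMk measurable_id) (hs.prod hw)]
  rfl

theorem ae_condDistrib_id_compl_fiber_eq_zero [MeasurableEq Y] (hf : Measurable f) {A : Set X}
    (hA : MeasurableSet A) (hνA : ν Aᶜ = 0) :
    ∀ᵐ u ∂ν.map f, condDistrib id f ν u (A ∩ f ⁻¹' {u})ᶜ = 0 := by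
  set G : Set (Y × X) := {p | p.2 ∈ A ∧ f p.2 = p.1}
  have hG : MeasurableSet G :=
    (hA.preimage measurable_snd).inter
      (measurableSet_eq_fun (hf.comp measurable_snd) measurable_fst)
  have hGc : (ν.map f ⊗ₘ condDistrib id f ν) Gᶜ = 0 := by
    rw [compProd_map_condDistrib aemeasurable_id,
      Measure.map_apply (hf.prodMk measurable_id) hG.compl]
    exact measure_mono_null (fun x hx hxA => hx ⟨hxA, rfl⟩) hνA
  rw [Measure.compProd_apply hG.compl,
    lintegral_eq_zero_iff (Kernel.measurable_kernel_prodMk_left hG.compl)] at hGc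
  filter_upwards [hGc] with u hu
  have hfiber : Prod.mk u ⁻¹' Gᶜ = (A ∩ f ⁻¹' {u})ᶜ := by
    ext x
    simp [G, eq_comm]
  rwa [hfiber] at hu

theorem ae_tendsto_measure_preimage_closedBall_inter_div [MetricSpace Y] [BorelSpace Y]
    [SecondCountableTopology Y] [HasBesicovitchCovering Y] (hf : Measurable f) {w : Set X}
    (hw : MeasurableSet w) :
    ∀ᵐ u ∂ν.map f, Tendsto (fun δ => ν (f ⁻¹' closedBall u δ ∩ w) / ν.map f (closedBall u δ))
      (𝓝[>] 0) (𝓝 (condDistrib id f ν u w)) := by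
  have hint : ∫⁻ u, condDistrib id f ν u w ∂ν.map f ≠ ∞ := by
    rw [← setLIntegral_univ, setLIntegral_condDistrib_id ν hf MeasurableSet.univ hw]
    exact measure_ne_top ν _
  filter_upwards [(Besicovitch.vitaliFamily (ν.map f)).ae_tendsto_lintegral_div'
    (Kernel.measurable_coe _ hw) hint] with u hu
  refine (hu.comp (Besicovitch.tendsto_filterAt _ u)).congr fun δ => ?_
  simp only [Function.comp_apply,
    setLIntegral_condDistrib_id ν hf measurableSet_closedBall hw]

end Disintegration

theorem exists_rat_closedBall_subset_closedBall_subset {α : Type*} [PseudoMetricSpace α]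
    {D : Set α} (hD : Dense D) (x : α) {r : ℝ} (hr : 0 < r) :
    ∃ x₀ ∈ D, ∃ r₁ r₂ : ℚ, closedBall x r ⊆ closedBall x₀ r₁ ∧
      closedBall x₀ r₁ ⊆ closedBall x r₂ ∧ 0 < (r₂ : ℝ) ∧ (r₂ : ℝ) ≤ 4 * r := by
  obtain ⟨x₀, hx₀D, hx₀⟩ := hD.exists_dist_lt x (half_pos hr)
  obtain ⟨r₁, hr₁, hr₁'⟩ := exists_rat_btwn (show 3 / 2 * r < 2 * r by linarith)
  obtain ⟨r₂, hr₂, hr₂'⟩ := exists_rat_btwn (show 3 * r < 4 * r by linarith)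
  refine ⟨x₀, hx₀D, r₁, r₂, fun y hy => ?_, fun y hy => ?_, by linarith, hr₂'.le⟩
  · rw [mem_closedBall] at hy ⊢
    linarith [dist_triangle y x x₀]
  · rw [mem_closedBall] at hy ⊢
    linarith [dist_triangle y x₀ x, dist_comm x x₀]

theorem le_div_of_tendsto_div_of_frequently_le {a b : ℝ → ℝ≥0∞} {L M c : ℝ≥0∞} {d : ℕ}
    (hlim : Tendsto (fun δ => a δ / b δ) (𝓝[>] 0) (𝓝 L))
    (ha : ∃ᶠ δ in 𝓝[>] 0, a δ ≤ M * ENNReal.ofReal (δ ^ d))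
    (hb : ∀ᶠ δ in 𝓝[>] 0, c * ENNReal.ofReal (δ ^ d) ≤ b δ) : L ≤ M / c := by
  refine le_of_tendsto_of_frequently hlim
    ((ha.and_eventually (hb.and self_mem_nhdsWithin)).mono fun δ ⟨haδ, hbδ, hδ⟩ => ?_)
  have hpos : ENNReal.ofReal (δ ^ d) ≠ 0 := by
    simpa using pow_pos (show (0 : ℝ) < δ from hδ) d
  calc a δ / b δ ≤ M * ENNReal.ofReal (δ ^ d) / (c * ENNReal.ofReal (δ ^ d)) :=
        ENNReal.div_le_div haδ hbδ
    _ = M / c := ENNReal.mul_div_mul_right _ _ hpos ENNReal.ofReal_ne_top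

section Tube

variable {X Y : Type*} [NormedAddCommGroup X] [NormedSpace ℝ X] [NormedAddCommGroup Y]
  [NormedSpace ℝ Y] (P : X →ₗ[ℝ] Y) (E : Set X)

def tube (x : X) (r δ : ℝ) : Set X :=
  {y | y ∈ E ∩ closedBall x r ∧ ‖P (y - x)‖ ≤ δ}

variable {P E}

theorem tube_mono {x : X} {r r' δ δ' : ℝ} (hr : r ≤ r') (hδ : δ ≤ δ') :
    tube P E x r δ ⊆ tube P E x r' δ' :=
  fun _ ⟨⟨hyE, hyr⟩, hyδ⟩ => ⟨⟨hyE, closedBall_subset_closedBall hr hyr⟩, hyδ.trans hδ⟩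

variable [MeasurableSpace X] {μ : Measure X}

variable (P E μ) in
/-- The rational parameters make this set measurable. -/
def thinTubeSet (t : ℝ) (d : ℕ) (N : ℝ≥0∞) (q : ℝ) : Set X :=
  ⋂ (r : ℚ) (_ : (r : ℝ) ∈ Set.Ioc 0 q) (k : ℕ),
    ⋃ (δ : ℚ) (_ : (δ : ℝ) ∈ Set.Ioo 0 (1 / ((k : ℝ) + 1))),
      {x | μ (tube P E x r δ) ≤ N * ENNReal.ofReal (r ^ t * δ ^ d)}

theorem frequently_measure_tube_le_of_mem_thinTubeSet {t : ℝ} {d : ℕ} {N : ℝ≥0∞} {q : ℝ}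
    {x : X} (hx : x ∈ thinTubeSet P E μ t d N q) {r : ℚ} (hr : (r : ℝ) ∈ Set.Ioc 0 q) :
    ∃ᶠ δ in 𝓝[>] 0, μ (tube P E x r δ) ≤ N * ENNReal.ofReal (r ^ t * δ ^ d) := by
  rw [Filter.frequently_iff]
  intro U hU
  obtain ⟨ε, hε, hεU⟩ := mem_nhdsGT_iff_exists_Ioo_subset.1 hU
  obtain ⟨k, hk⟩ := exists_nat_one_div_lt (Set.mem_Ioi.1 hε)
  simp only [thinTubeSet, Set.mem_iInter, Set.mem_iUnion] at hx
  obtain ⟨δ, hδ, hδx⟩ := hx r hr k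
  exact ⟨δ, hεU ⟨hδ.1, hδ.2.trans hk⟩, hδx⟩

theorem exists_rat_measure_tube_le {x : X} {r : ℝ} (hr : 0 ≤ r) {t : ℝ} {d : ℕ} {M : ℝ≥0∞}
    (h : ∃ᶠ δ in 𝓝[>] 0, μ (tube P E x r δ) ≤ M * ENNReal.ofReal (r ^ t * δ ^ d))
    {ε : ℝ} (hε : 0 < ε) :
    ∃ δ : ℚ, (δ : ℝ) ∈ Set.Ioo 0 ε ∧
      μ (tube P E x r δ) ≤ 2 ^ d * M * ENNReal.ofReal (r ^ t * δ ^ d) := by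
  obtain ⟨δ, hδμ, hδ0, hδε⟩ := (h.and_eventually (Ioo_mem_nhdsGT hε)).exists
  obtain ⟨δ', hδ', hδ'δ⟩ := exists_rat_btwn (half_lt_self hδ0)
  have hδ'0 : (0 : ℝ) < δ' := (half_pos hδ0).trans hδ'
  refine ⟨δ', ⟨hδ'0, hδ'δ.trans hδε⟩, ?_⟩
  calc μ (tube P E x r δ') ≤ μ (tube P E x r δ) := measure_mono (tube_mono le_rfl hδ'δ.le)
    _ ≤ M * ENNReal.ofReal (r ^ t * (2 * δ') ^ d) := by
        exact hδμ.trans (by gcongr; linarith)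
    _ = 2 ^ d * M * ENNReal.ofReal (r ^ t * δ' ^ d) := by
        rw [mul_pow, mul_left_comm, ENNReal.ofReal_mul (by positivity),
          ENNReal.ofReal_pow zero_le_two, ENNReal.ofReal_ofNat]
        ring

theorem exists_mem_thinTubeSet_of_limsup_lt_top {t : ℝ} {d : ℕ} {x : X}
    (hx : limsup (fun r => liminf (fun δ =>
      μ (tube P E x r δ) / ENNReal.ofReal (r ^ t * δ ^ d)) (𝓝[>] 0)) (𝓝[>] 0) < ∞) :
    ∃ N : ℕ, ∃ q : ℚ, 0 < q ∧ x ∈ thinTubeSet P E μ t d (2 ^ d * N) q := by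
  obtain ⟨N, hN⟩ := ENNReal.exists_nat_gt hx.ne
  obtain ⟨u, hu, hIoo⟩ := mem_nhdsGT_iff_exists_Ioo_subset.1 (eventually_lt_of_limsup_lt hN)
  obtain ⟨q, hq, hqu⟩ := exists_rat_btwn (Set.mem_Ioi.1 hu)
  refine ⟨N, q, by exact_mod_cast hq, ?_⟩
  simp only [thinTubeSet, Set.mem_iInter, Set.mem_iUnion]
  intro r hr k
  have hfreq : ∃ᶠ δ in 𝓝[>] 0, μ (tube P E x r δ) ≤ N * ENNReal.ofReal (r ^ t * δ ^ d) := by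
    have hr' : liminf (fun δ => μ (tube P E x r δ) / ENNReal.ofReal (r ^ t * δ ^ d)) (𝓝[>] 0)
        < N := hIoo ⟨hr.1, hr.2.trans_lt hqu⟩
    have hlt := frequently_lt_of_liminf_lt (by isBoundedDefault) hr'
    refine (hlt.and_eventually self_mem_nhdsWithin).mono fun δ ⟨hδ, (hδ0 : 0 < δ)⟩ => ?_
    have hpos : ENNReal.ofReal (r ^ t * δ ^ d) ≠ 0 := by
      simpa using mul_pos (Real.rpow_pos_of_pos hr.1 t) (pow_pos hδ0 d)
    exact ((ENNReal.div_lt_iff (Or.inl hpos) (Or.inl ENNReal.ofReal_ne_top)).1 hδ).le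
  obtain ⟨δ, hδ, hδx⟩ := exists_rat_measure_tube_le hr.1.le hfreq (ε := 1 / ((k : ℝ) + 1))
    (by positivity)
  exact ⟨δ, hδ, hδx⟩

theorem measure_restrict_preimage_closedBall_inter_le_tube {A w : Set X} (hA : MeasurableSet A)
    (hAE : A ⊆ E) {x : X} {r δ : ℝ} (hw : w ⊆ closedBall x r) :
    μ.restrict A (P ⁻¹' closedBall (P x) δ ∩ w) ≤ μ (tube P E x r δ) := by
  rw [Measure.restrict_apply' hA]
  refine measure_mono ?_
  rintro y ⟨⟨hyδ, hyw⟩, hyA⟩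
  refine ⟨⟨hAE hyA, hw hyw⟩, ?_⟩
  rwa [map_sub, ← dist_eq_norm, ← mem_closedBall]

variable [FiniteDimensional ℝ X] [BorelSpace X]

theorem measurable_measure_tube [SFinite μ] (hE : MeasurableSet E) (r δ : ℝ) :
    Measurable fun x => μ (tube P E x r δ) := by
  have hP : Continuous P := P.continuous_of_finiteDimensional
  have hW : MeasurableSet {p : X × X | p.2 ∈ E ∧ dist p.2 p.1 ≤ r ∧ ‖P (p.2 - p.1)‖ ≤ δ} :=
    (hE.preimage measurable_snd).inter <|
      (isClosed_le (continuous_snd.dist continuous_fst) continuous_const).measurableSet.inter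
      (isClosed_le (hP.comp (continuous_snd.sub continuous_fst)).norm
        continuous_const).measurableSet
  convert measurable_measure_prodMk_left (ν := μ) hW using 3 with x
  ext y
  simp [tube, and_assoc]

theorem measurableSet_thinTubeSet [SFinite μ] (hE : MeasurableSet E) {t : ℝ} {d : ℕ}
    {N : ℝ≥0∞} {q : ℝ} : MeasurableSet (thinTubeSet P E μ t d N q) :=
  .iInter fun _ => .iInter fun _ => .iInter fun _ => .iUnion fun _ => .iUnion fun _ =>
    measurableSet_le (measurable_measure_tube hE _ _) measurable_const

end Tube

section Core

variable {X Y : Type*} [NormedAddCommGroup X] [NormedSpace ℝ X] [FiniteDimensional ℝ X]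
  [MeasurableSpace X] [BorelSpace X] [NormedAddCommGroup Y] [NormedSpace ℝ Y]
  [FiniteDimensional ℝ Y] [MeasurableSpace Y] [BorelSpace Y]

theorem measure_eq_zero_of_frequently_measure_tube_le {P : X →ₗ[ℝ] Y} {E : Set X}
    {μ : Measure X} [IsFiniteMeasure μ] {t : ℝ} (ht : 0 < t)
    (hfiber : ∀ u, μH[t] (E ∩ P ⁻¹' {u}) = 0) {A : Set X} (hA : MeasurableSet A) (hAE : A ⊆ E)
    {N : ℝ≥0∞} (hN : N ≠ ∞) {q : ℝ} (hq : 0 < q)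
    (htube : ∀ x ∈ A, ∀ r : ℚ, (r : ℝ) ∈ Set.Ioc 0 q →
      ∃ᶠ δ in 𝓝[>] 0, μ (tube P E x r δ) ≤ N * ENNReal.ofReal (r ^ t * δ ^ finrank ℝ Y)) :
    μ A = 0 := by
  by_contra hA0
  have hP : Measurable P := P.continuous_of_finiteDimensional.measurable
  set ν := μ.restrict A
  set κ := condDistrib id P ν
  obtain ⟨D, hDc, hD⟩ := TopologicalSpace.exists_countable_dense X
  have hconv : ∀ᵐ u ∂ν.map P, ∀ x₀ ∈ D, ∀ r : ℚ,
      Tendsto (fun δ => ν (P ⁻¹' closedBall u δ ∩ closedBall x₀ r) / ν.map P (closedBall u δ))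
        (𝓝[>] 0) (𝓝 (κ u (closedBall x₀ r))) := by
    rw [ae_ball_iff hDc]
    exact fun x₀ _ => ae_all_iff.2 fun r =>
      ae_tendsto_measure_preimage_closedBall_inter_div ν hP measurableSet_closedBall
  have : (ae (ν.map P)).NeBot := ae_neBot.2 fun h => hA0 <| by
    simpa [ν, Measure.map_apply hP MeasurableSet.univ] using congrArg (· Set.univ) h
  have hνA : ν Aᶜ = 0 := by simp [ν, Measure.restrict_apply hA.compl]
  obtain ⟨u, hκS, hconv, c, hc, hcδ⟩ := ((ae_condDistrib_id_compl_fiber_eq_zero ν hP hA hνA).and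
    (hconv.and (ae_exists_pos_mul_le_measure_closedBall (ν.map P)))).exists
  set S := A ∩ P ⁻¹' {u}
  have hS : MeasurableSet S := hA.inter (hP (measurableSet_singleton u))
  set C := N * ENNReal.ofReal (4 ^ t) / c
  have hball : ∀ x ∈ S, ∀ r, 0 < r → r ≤ q / 4 →
      κ u (closedBall x r) ≤ C * ENNReal.ofReal (r ^ t) := by
    intro x ⟨hxA, hxu⟩ r hr hrq
    obtain ⟨x₀, hx₀, r₁, r₂, hsub₁, hsub₂, hr₂, hr₂r⟩ :=
      exists_rat_closedBall_subset_closedBall_subset hD x hr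
    have hnum : ∃ᶠ δ in 𝓝[>] 0, ν (P ⁻¹' closedBall u δ ∩ closedBall x₀ r₁) ≤
        N * ENNReal.ofReal (r₂ ^ t) * ENNReal.ofReal (δ ^ finrank ℝ Y) := by
      refine (htube x hxA r₂ ⟨hr₂, by linarith⟩).mono fun δ hδ => ?_
      rw [mul_assoc, ← ENNReal.ofReal_mul (by positivity)]
      rw [← Set.mem_preimage.1 hxu]
      exact (measure_restrict_preimage_closedBall_inter_le_tube hA hAE hsub₂).trans hδ
    calc κ u (closedBall x r) ≤ κ u (closedBall x₀ r₁) := measure_mono hsub₁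
      _ ≤ N * ENNReal.ofReal (r₂ ^ t) / c :=
        le_div_of_tendsto_div_of_frequently_le (hconv x₀ hx₀ r₁) hnum hcδ
      _ ≤ N * (ENNReal.ofReal (4 ^ t) * ENNReal.ofReal (r ^ t)) / c := by
        gcongr
        rw [← ENNReal.ofReal_mul (by positivity), ← Real.mul_rpow (by norm_num) hr.le]
        exact ENNReal.ofReal_le_ofReal (Real.rpow_le_rpow hr₂.le hr₂r ht.le)
      _ = C * ENNReal.ofReal (r ^ t) := by rw [← mul_assoc, ENNReal.mul_div_right_comm]
  have hCtop : C ≠ ∞ := ENNReal.div_ne_top (ENNReal.mul_ne_top hN ENNReal.ofReal_ne_top) hc.ne'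
  have hSt : μH[t] S = 0 := measure_mono_null (Set.inter_subset_inter_left _ hAE) (hfiber u)
  have hκS : κ u S = 1 := (prob_compl_eq_zero_iff hS).1 hκS
  exact one_ne_zero (hκS ▸ measure_eq_zero_of_hausdorffMeasure_eq_zero hS ht hCtop
    (by positivity) hball hSt)

end Core

theorem stmt2_general {n m : ℕ} {t : ℝ} (ht : 0 < t)
    (P : EuclideanSpace ℝ (Fin n) →ₗ[ℝ] EuclideanSpace ℝ (Fin m))
    (E : Set (EuclideanSpace ℝ (Fin n))) (hE : MeasurableSet E)
    (hlevel : ∀ u : EuclideanSpace ℝ (Fin m), μH[t] (E ∩ (fun y => P y) ⁻¹' {u}) = 0)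
    (μ : Measure (EuclideanSpace ℝ (Fin n))) [IsFiniteMeasure μ]
    (hμsupp : ∃ K, IsCompact K ∧ K ⊆ E ∧ μ Kᶜ = 0) :
    ∀ᵐ x ∂μ,
      limsup (fun r : ℝ =>
          liminf (fun δ : ℝ =>
              μ {y | y ∈ E ∩ closedBall x r ∧ ‖P (y - x)‖ ≤ δ} /
                ENNReal.ofReal (r ^ t * δ ^ m)) (𝓝[>] 0))
        (𝓝[>] 0) = ∞ := by
  obtain ⟨K, -, hKE, hKc⟩ := hμsupp
  have hEc : μ Eᶜ = 0 := measure_mono_null (Set.compl_subset_compl.2 hKE) hKc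
  have hthin : ∀ (N : ℕ) (q : ℚ), 0 < q →
      μ (thinTubeSet P E μ t m (2 ^ m * N) q ∩ E) = 0 := fun N q hq =>
    measure_eq_zero_of_frequently_measure_tube_le (N := 2 ^ m * N) (q := q) ht hlevel
      ((measurableSet_thinTubeSet hE).inter hE) Set.inter_subset_right (by finiteness)
      (by exact_mod_cast hq)
      fun x hx r hr => by
        simpa only [finrank_euclideanSpace_fin] using
          frequently_measure_tube_le_of_mem_thinTubeSet hx.1 hr
  rw [ae_iff]
  refine measure_mono_null (fun x hx => ?_) <| measure_union_null hEc <|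
    measure_iUnion_null fun N => measure_iUnion_null fun q => measure_iUnion_null (hthin N q)
  by_cases hxE : x ∈ E
  · obtain ⟨N, q, hq, hxN⟩ := exists_mem_thinTubeSet_of_limsup_lt_top (lt_top_iff_ne_top.2 hx)
    exact Or.inr (Set.mem_iUnion.2 ⟨N, Set.mem_iUnion.2 ⟨q, Set.mem_iUnion.2 ⟨hq, hxN, hxE⟩⟩⟩)
  · exact Or.inl hxE

theorem stmt2 {n m : ℕ} (hm : 1 ≤ m) (hmn : m < n) {t : ℝ} (ht : 0 < t)
    (P : EuclideanSpace ℝ (Fin n) →ₗ[ℝ] EuclideanSpace ℝ (Fin m)) (hP : IsOrthoProj P)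
    (E : Set (EuclideanSpace ℝ (Fin n))) (hE : MeasurableSet E)
    (hlevel : ∀ u : EuclideanSpace ℝ (Fin m), μH[t] (E ∩ (fun y => P y) ⁻¹' {u}) = 0)
    (μ : Measure (EuclideanSpace ℝ (Fin n))) [IsFiniteMeasure μ] (hμ0 : μ ≠ 0)
    (hμsupp : ∃ K, IsCompact K ∧ K ⊆ E ∧ μ Kᶜ = 0) :
    ∀ᵐ x ∂μ,
      limsup (fun r : ℝ =>
          liminf (fun δ : ℝ =>
              μ {y | y ∈ E ∩ closedBall x r ∧ ‖P (y - x)‖ ≤ δ} /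
                ENNReal.ofReal (r ^ t * δ ^ m)) (𝓝[>] 0))
        (𝓝[>] 0) = ∞ :=
  stmt2_general ht P E hE hlevel μ hμsupp
end

section
/- Let t > 0, C > 0, r₀ > 0, let P : ℝⁿ → ℝᵐ be an orthogonal projection, let F ⊂ ℝⁿ be compact, and let μ be a finite Borel measure on ℝⁿ. Suppose that for every x ∈ F and every 0 < r < r₀, liminf_{δ→0} r^{-t} δ^{-m} μ({y ∈ F ∩ B(x,r) : |P(y − x)| ≤ δ}) < C. Then for every x₀ ∈ F, every 0 < r < r₀/2, and every δ > 0, μ({y ∈ F ∩ B(x₀,r) : |P(y − x₀)| ≤ δ}) ≤ (2r)^t C δ^m. -/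
open MeasureTheory Metric Filter
open scoped ENNReal Topology

noncomputable section

/-!
Push the restriction of `μ` to `K = F ∩ B(x₀, r)` forward by `P`. For `x ∈ K` the ball `B(x, 2r)`
contains `K`, so the hypothesis at `x` and scale `2r < r₀` yields arbitrarily small `ρ` with
`ν(B(P x, ρ)) ≤ (2r)^t C ρ^m` for the image measure `ν`. A Besicovitch covering of
`B(P x₀, δ) ∩ P(K)` by disjoint such balls of radii `< ε`, complete up to a `ν`-null set, packs
them into `B(P x₀, δ + ε)`; comparing Lebesgue volumes gives `ν(B(P x₀, δ)) ≤ (2r)^t C (δ + ε)^m`,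
and `ε → 0` finishes.
-/

open Module Set

theorem frequently_le_mul_of_liminf_div_lt {α : Type*} {l : Filter α} {u v : α → ℝ≥0∞}
    {c : ℝ≥0∞} (hc : c ≠ ∞) (h : liminf (fun a => u a / v a) l < c) :
    ∃ᶠ a in l, u a ≤ c * v a :=
  (frequently_lt_of_liminf_lt (by isBoundedDefault) h).mono fun _ ha =>
    (ENNReal.div_le_iff_le_mul (Or.inr hc) (Or.inr (pos_of_gt ha).ne')).1 ha.le

section Covering

variable {E : Type*} [NormedAddCommGroup E] [NormedSpace ℝ E] [FiniteDimensional ℝ E]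
  [MeasurableSpace E] [BorelSpace E]

theorem tsum_ofReal_pow_finrank_le_of_pairwiseDisjoint {t : Set E} (ht : t.Countable)
    {r : E → ℝ} (hr : ∀ y ∈ t, 0 ≤ r y) (hdisj : t.PairwiseDisjoint fun y => closedBall y (r y))
    {x : E} {R : ℝ} (hR : 0 ≤ R) (hsub : ⋃ y ∈ t, closedBall y (r y) ⊆ closedBall x R) :
    ∑' y : t, ENNReal.ofReal (r y ^ finrank ℝ E) ≤ ENNReal.ofReal (R ^ finrank ℝ E) := by
  set μ : Measure E := Measure.addHaar
  have hunit_ne_zero : μ (ball 0 1) ≠ 0 := (measure_ball_pos μ 0 one_pos).ne'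
  rw [← ENNReal.mul_le_mul_iff_left hunit_ne_zero measure_ball_lt_top.ne,
    ← ENNReal.tsum_mul_right]
  calc ∑' y : t, ENNReal.ofReal (r y ^ finrank ℝ E) * μ (ball 0 1)
      = ∑' y : t, μ (closedBall y (r y)) :=
        tsum_congr fun y => (μ.addHaar_closedBall _ (hr y y.2)).symm
    _ = μ (⋃ y ∈ t, closedBall y (r y)) :=
        (measure_biUnion ht hdisj fun _ _ => measurableSet_closedBall).symm
    _ ≤ μ (closedBall x R) := measure_mono hsub
    _ = ENNReal.ofReal (R ^ finrank ℝ E) * μ (ball 0 1) := μ.addHaar_closedBall x hR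

variable (ν : Measure E) [SFinite ν] {c : ℝ≥0∞} {s : Set E} {x : E} {δ : ℝ}

theorem measure_le_of_frequently_measure_closedBall_le_add {ε : ℝ} (hδ : 0 ≤ δ) (hε : 0 < ε)
    (hs : s ⊆ closedBall x δ)
    (hν : ∀ z ∈ s, ∃ᶠ ρ in 𝓝[>] 0, ν (closedBall z ρ) ≤ c * ENNReal.ofReal (ρ ^ finrank ℝ E)) :
    ν s ≤ c * ENNReal.ofReal ((δ + ε) ^ finrank ℝ E) := by
  obtain ⟨t, r, ht, hts, hr, hnull, hdisj⟩ := Besicovitch.exists_disjoint_closedBall_covering_ae ν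
    (fun z => {ρ | ν (closedBall z ρ) ≤ c * ENNReal.ofReal (ρ ^ finrank ℝ E)}) s
    (fun z hz η hη => ((hν z hz).and_eventually (Ioo_mem_nhdsGT hη)).exists)
    (fun _ => ε) (fun _ _ => hε)
  have hpack : ⋃ y ∈ t, closedBall y (r y) ⊆ closedBall x (δ + ε) :=
    iUnion₂_subset fun y hy => closedBall_subset_closedBall' <| by
      linarith [(hr y hy).2.2, mem_closedBall.1 (hs (hts hy))]
  calc ν s ≤ ν (⋃ y ∈ t, closedBall y (r y)) := measure_mono_ae (ae_le_set.2 hnull)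
    _ ≤ ∑' y : t, ν (closedBall y (r y)) := measure_biUnion_le ν ht _
    _ ≤ ∑' y : t, c * ENNReal.ofReal (r y ^ finrank ℝ E) :=
        ENNReal.tsum_le_tsum fun y => (hr y y.2).1
    _ = c * ∑' y : t, ENNReal.ofReal (r y ^ finrank ℝ E) := ENNReal.tsum_mul_left
    _ ≤ c * ENNReal.ofReal ((δ + ε) ^ finrank ℝ E) := by
        gcongr
        exact tsum_ofReal_pow_finrank_le_of_pairwiseDisjoint ht (fun y hy => (hr y hy).2.1.le)
          hdisj (by linarith) hpack

theorem measure_le_of_frequently_measure_closedBall_le (hc : c ≠ ∞) (hs : s ⊆ closedBall x δ)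
    (hν : ∀ z ∈ s, ∃ᶠ ρ in 𝓝[>] 0, ν (closedBall z ρ) ≤ c * ENNReal.ofReal (ρ ^ finrank ℝ E)) :
    ν s ≤ c * ENNReal.ofReal (δ ^ finrank ℝ E) := by
  rcases s.eq_empty_or_nonempty with rfl | ⟨z, hz⟩
  · simp
  have hδ : 0 ≤ δ := dist_nonneg.trans (mem_closedBall.1 (hs hz))
  have hlim : Tendsto (fun ε => c * ENNReal.ofReal ((δ + ε) ^ finrank ℝ E)) (𝓝[>] 0)
      (𝓝 (c * ENNReal.ofReal (δ ^ finrank ℝ E))) := by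
    have hcont : Continuous fun ε : ℝ => ENNReal.ofReal ((δ + ε) ^ finrank ℝ E) :=
      ENNReal.continuous_ofReal.comp (by fun_prop)
    refine ENNReal.Tendsto.const_mul (tendsto_nhdsWithin_of_tendsto_nhds ?_) (Or.inr hc)
    simpa using hcont.tendsto 0
  exact ge_of_tendsto hlim <| eventually_nhdsWithin_of_forall fun ε hε =>
    measure_le_of_frequently_measure_closedBall_le_add ν hδ hε hs hν

end Covering

section Projection

variable {E F : Type*} [NormedAddCommGroup E] [NormedSpace ℝ E] [FiniteDimensional ℝ E]
  [MeasurableSpace E] [OpensMeasurableSpace E]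
  [NormedAddCommGroup F] [NormedSpace ℝ F] [MeasurableSpace F] [BorelSpace F]
  (P : E →ₗ[ℝ] F) (μ : Measure E)

theorem map_restrict_closedBall_le {K S : Set E} (hK : K ⊆ S) (x : E) (ρ : ℝ) :
    (μ.restrict K).map P (closedBall (P x) ρ) ≤ μ {y | y ∈ S ∧ ‖P (y - x)‖ ≤ ρ} := by
  have hP : Measurable P := P.continuous_of_finiteDimensional.measurable
  rw [Measure.map_apply hP measurableSet_closedBall,
    Measure.restrict_apply (hP measurableSet_closedBall)]
  refine measure_mono fun y ⟨hy, hyK⟩ => ⟨hK hyK, ?_⟩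
  rwa [map_sub, ← dist_eq_norm]

theorem measure_le_map_restrict_closedBall_inter_image (K : Set E) (x : E) (δ : ℝ) :
    μ {y | y ∈ K ∧ ‖P (y - x)‖ ≤ δ} ≤ (μ.restrict K).map P (closedBall (P x) δ ∩ P '' K) := by
  have hP : AEMeasurable P (μ.restrict K) :=
    P.continuous_of_finiteDimensional.measurable.aemeasurable
  refine le_trans ?_ ((Measure.le_restrict_apply _ _).trans (Measure.le_map_apply hP _))
  refine measure_mono fun y ⟨hyK, hy⟩ => ⟨⟨?_, y, hyK, rfl⟩, hyK⟩
  rwa [mem_closedBall, dist_eq_norm, ← map_sub]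

end Projection

theorem stmt9_general {n m : ℕ} {t C r₀ : ℝ}
    (P : EuclideanSpace ℝ (Fin n) →ₗ[ℝ] EuclideanSpace ℝ (Fin m))
    (F : Set (EuclideanSpace ℝ (Fin n)))
    (μ : Measure (EuclideanSpace ℝ (Fin n))) [IsFiniteMeasure μ]
    (hliminf : ∀ x ∈ F, ∀ r : ℝ, 0 < r → r < r₀ →
      liminf (fun δ : ℝ =>
          μ {y | y ∈ F ∩ closedBall x r ∧ ‖P (y - x)‖ ≤ δ} /
            ENNReal.ofReal (r ^ t * δ ^ m)) (𝓝[>] 0) < ENNReal.ofReal C) :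
    ∀ x₀ ∈ F, ∀ r : ℝ, 0 < r → r < r₀ / 2 → ∀ δ : ℝ, 0 < δ →
      μ {y | y ∈ F ∩ closedBall x₀ r ∧ ‖P (y - x₀)‖ ≤ δ} ≤
        ENNReal.ofReal ((2 * r) ^ t * C * δ ^ m) := by
  intro x₀ _ r hr hrr₀ δ hδ
  set K := F ∩ closedBall x₀ r
  set c := ENNReal.ofReal C * ENNReal.ofReal ((2 * r) ^ t)
  have hdensity : ∀ z ∈ closedBall (P x₀) δ ∩ P '' K, ∃ᶠ ρ in 𝓝[>] 0,
      (μ.restrict K).map P (closedBall z ρ) ≤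
        c * ENNReal.ofReal (ρ ^ finrank ℝ (EuclideanSpace ℝ (Fin m))) := by
    rintro _ ⟨-, x, hx, rfl⟩
    have hKx : K ⊆ F ∩ closedBall x (2 * r) := fun y hy => ⟨hy.1, mem_closedBall.2 <| by
      linarith [dist_triangle_right y x x₀, mem_closedBall.1 hy.2, mem_closedBall.1 hx.2]⟩
    refine (frequently_le_mul_of_liminf_div_lt ENNReal.ofReal_ne_top
      (hliminf x hx.1 (2 * r) (by positivity) (by linarith))).mono fun ρ hρ => ?_
    rw [finrank_euclideanSpace_fin, mul_assoc, ← ENNReal.ofReal_mul (by positivity)]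
    exact (map_restrict_closedBall_le P μ hKx x ρ).trans hρ
  calc μ {y | y ∈ K ∧ ‖P (y - x₀)‖ ≤ δ}
      ≤ (μ.restrict K).map P (closedBall (P x₀) δ ∩ P '' K) :=
        measure_le_map_restrict_closedBall_inter_image P μ K x₀ δ
    _ ≤ c * ENNReal.ofReal (δ ^ finrank ℝ (EuclideanSpace ℝ (Fin m))) :=
        measure_le_of_frequently_measure_closedBall_le _ (by finiteness) inter_subset_left hdensity
    _ = ENNReal.ofReal ((2 * r) ^ t * C * δ ^ m) := by
        rw [finrank_euclideanSpace_fin, ENNReal.ofReal_mul' (by positivity),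
          ENNReal.ofReal_mul (by positivity), mul_comm (ENNReal.ofReal ((2 * r) ^ t))]

theorem stmt9 {n m : ℕ} (hm : 1 ≤ m) (hmn : m < n)
    {t C r₀ : ℝ} (ht : 0 < t) (hC : 0 < C) (hr₀ : 0 < r₀)
    (P : EuclideanSpace ℝ (Fin n) →ₗ[ℝ] EuclideanSpace ℝ (Fin m)) (hP : IsOrthoProj P)
    (F : Set (EuclideanSpace ℝ (Fin n))) (hF : IsCompact F)
    (μ : Measure (EuclideanSpace ℝ (Fin n))) [IsFiniteMeasure μ]
    (hliminf : ∀ x ∈ F, ∀ r : ℝ, 0 < r → r < r₀ →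
      liminf (fun δ : ℝ =>
          μ {y | y ∈ F ∩ closedBall x r ∧ ‖P (y - x)‖ ≤ δ} /
            ENNReal.ofReal (r ^ t * δ ^ m)) (𝓝[>] 0) < ENNReal.ofReal C) :
    ∀ x₀ ∈ F, ∀ r : ℝ, 0 < r → r < r₀ / 2 → ∀ δ : ℝ, 0 < δ →
      μ {y | y ∈ F ∩ closedBall x₀ r ∧ ‖P (y - x₀)‖ ≤ δ} ≤
        ENNReal.ofReal ((2 * r) ^ t * C * δ ^ m) :=
  stmt9_general P F μ hliminf
end
end

section
/- Let m ≥ 1 and let ν be a nonzero finite Borel measure on ℝᵐ with compact support. Then there exist a point u ∈ ℝᵐ and constants c > 0 and δ₀ > 0 such that ν(B(u,δ)) ≥ c δ^m ν(ℝᵐ) for all 0 < δ < δ₀. In particular, if P : ℝⁿ → ℝᵐ is an orthogonal projection and μ is a nonzero finite Borel measure with compact support F ⊂ ℝⁿ, then there exist u ∈ ℝᵐ, c > 0 and δ₀ > 0 such that μ(F ∩ P⁻¹(B(u,δ))) ≥ c δ^m μ(F) for all 0 < δ < δ₀. -/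
/-!
At `ν`-almost every point `u`, the Besicovitch differentiation theorem says that
`vol (B(u,δ)) / ν (B(u,δ))` converges to the finite Radon–Nikodym derivative of Lebesgue measure
with respect to `ν`; so for small `δ` the ratio stays below some constant `C`, i.e.
`ν (B(u,δ)) ≥ vol (B(u,δ)) / C = δ^m vol (B(0,1)) / C`. The statement about `μ` follows by
applying this to the push-forward `ν = P_* μ`, since `μ` is carried by `F`.
-/

open MeasureTheory Metric Filter Set
open scoped ENNReal NNReal Topology

noncomputable section

theorem Besicovitch.exists_measure_closedBall_le_mul {β : Type*} [MetricSpace β]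
    [MeasurableSpace β] [BorelSpace β] [SecondCountableTopology β] [HasBesicovitchCovering β]
    (ρ ν : Measure β) [IsLocallyFiniteMeasure ρ] [IsLocallyFiniteMeasure ν] (hν : ν ≠ 0) :
    ∃ (x : β) (C : ℝ≥0) (δ₀ : ℝ), 0 < C ∧ 0 < δ₀ ∧
      ∀ δ ∈ Ioo 0 δ₀, ρ (closedBall x δ) ≤ C * ν (closedBall x δ) := by
  have : (ae ν).NeBot := ae_neBot.mpr hν
  obtain ⟨x, hx_tendsto, hx_finite⟩ :=
    (ae_tendsto_rnDeriv ρ ν |>.and (Measure.rnDeriv_lt_top ρ ν)).exists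
  obtain ⟨C, hC, -⟩ := ENNReal.lt_iff_exists_nnreal_btwn.mp hx_finite
  have hC_pos : (0 : ℝ≥0∞) < C := zero_le.trans_lt hC
  obtain ⟨a, δ₀, ⟨ha, hδ₀⟩, hratio⟩ :=
    (eventually_nhdsWithin_iff.mp (hx_tendsto.eventually_lt_const hC)).exists_Ioo_subset
  refine ⟨x, C, δ₀, ENNReal.coe_pos.mp hC_pos, hδ₀, fun δ hδ => ?_⟩
  rw [← ENNReal.div_le_iff_le_mul (.inr ENNReal.coe_ne_top) (.inr hC_pos.ne')]
  exact (hratio ⟨ha.trans hδ.1, hδ.2⟩ hδ.1).le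

theorem exists_ofReal_mul_pow_finrank_mul_measure_univ_le_measure_closedBall
    {E : Type*} [NormedAddCommGroup E] [NormedSpace ℝ E] [FiniteDimensional ℝ E]
    [MeasurableSpace E] [BorelSpace E] (ν : Measure E) [IsFiniteMeasure ν] (hν : ν ≠ 0) :
    ∃ (u : E) (c δ₀ : ℝ), 0 < c ∧ 0 < δ₀ ∧ ∀ δ : ℝ, 0 < δ → δ < δ₀ →
      ENNReal.ofReal (c * δ ^ Module.finrank ℝ E) * ν univ ≤ ν (closedBall u δ) := by
  set μ : Measure E := Measure.addHaar
  obtain ⟨u, C, δ₀, hC, hδ₀, hball⟩ := Besicovitch.exists_measure_closedBall_le_mul μ ν hν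
  set V := μ.real (ball 0 1)
  set T := ν.real univ
  have hV : 0 < V := ENNReal.toReal_pos (measure_ball_pos μ 0 one_pos).ne' measure_ball_lt_top.ne
  have hT : 0 < T := ENNReal.toReal_pos (Measure.measure_univ_pos.mpr hν).ne' (by finiteness)
  refine ⟨u, V / (C * T), δ₀, by positivity, hδ₀, fun δ hδ hδδ₀ => ?_⟩
  have hreal : δ ^ Module.finrank ℝ E * V ≤ C * ν.real (closedBall u δ) := by
    rw [← Measure.addHaar_real_closedBall μ u hδ.le, measureReal_def, measureReal_def,
      ← ENNReal.coe_toReal, ← ENNReal.toReal_mul]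
    exact ENNReal.toReal_mono (by finiteness) (hball δ ⟨hδ, hδδ₀⟩)
  calc ENNReal.ofReal (V / (C * T) * δ ^ Module.finrank ℝ E) * ν univ
      = ENNReal.ofReal (V / (C * T) * δ ^ Module.finrank ℝ E * T) := by
        rw [ENNReal.ofReal_mul' hT.le, ofReal_measureReal]
    _ ≤ ENNReal.ofReal (ν.real (closedBall u δ)) := by
        gcongr
        calc V / (C * T) * δ ^ Module.finrank ℝ E * T = δ ^ Module.finrank ℝ E * V / C := by
              field_simp
          _ ≤ ν.real (closedBall u δ) := (div_le_iff₀' (NNReal.coe_pos.mpr hC)).mpr hreal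
    _ = ν (closedBall u δ) := ofReal_measureReal

theorem stmt10_general {n m : ℕ} :
    (∀ ν : Measure (EuclideanSpace ℝ (Fin m)), IsFiniteMeasure ν → ν ≠ 0 →
      (∃ K, IsCompact K ∧ ν Kᶜ = 0) →
      ∃ (u : EuclideanSpace ℝ (Fin m)) (c δ₀ : ℝ), 0 < c ∧ 0 < δ₀ ∧
        ∀ δ : ℝ, 0 < δ → δ < δ₀ →
          ENNReal.ofReal (c * δ ^ m) * ν Set.univ ≤ ν (closedBall u δ)) ∧
    (∀ P : EuclideanSpace ℝ (Fin n) →ₗ[ℝ] EuclideanSpace ℝ (Fin m), IsOrthoProj P →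
      ∀ (μ : Measure (EuclideanSpace ℝ (Fin n))) (F : Set (EuclideanSpace ℝ (Fin n))),
        IsFiniteMeasure μ → μ ≠ 0 → IsCompact F → μ Fᶜ = 0 →
        ∃ (u : EuclideanSpace ℝ (Fin m)) (c δ₀ : ℝ), 0 < c ∧ 0 < δ₀ ∧
          ∀ δ : ℝ, 0 < δ → δ < δ₀ →
            ENNReal.ofReal (c * δ ^ m) * μ F ≤
              μ (F ∩ (fun y => P y) ⁻¹' closedBall u δ)) := by
  have key := exists_ofReal_mul_pow_finrank_mul_measure_univ_le_measure_closedBall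
    (E := EuclideanSpace ℝ (Fin m))
  simp only [finrank_euclideanSpace_fin] at key
  refine ⟨fun ν _ hν _ => key ν hν, fun P _ μ F _ hμ _ hF => ?_⟩
  have hP : Measurable P := P.continuous_of_finiteDimensional.measurable
  obtain ⟨u, c, δ₀, hc, hδ₀, hball⟩ :=
    key (μ.map P) ((Measure.map_eq_zero_iff hP.aemeasurable).not.mpr hμ)
  refine ⟨u, c, δ₀, hc, hδ₀, fun δ hδ hδδ₀ => ?_⟩
  rw [measure_of_measure_compl_eq_zero hF, inter_comm, measure_inter_conull hF]
  simpa [Measure.map_apply hP measurableSet_closedBall, Measure.map_apply hP MeasurableSet.univ]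
    using hball δ hδ hδδ₀

theorem stmt10 {n m : ℕ} (hm : 1 ≤ m) (hmn : m < n) :
    (∀ ν : Measure (EuclideanSpace ℝ (Fin m)), IsFiniteMeasure ν → ν ≠ 0 →
      (∃ K, IsCompact K ∧ ν Kᶜ = 0) →
      ∃ (u : EuclideanSpace ℝ (Fin m)) (c δ₀ : ℝ), 0 < c ∧ 0 < δ₀ ∧
        ∀ δ : ℝ, 0 < δ → δ < δ₀ →
          ENNReal.ofReal (c * δ ^ m) * ν Set.univ ≤ ν (closedBall u δ)) ∧
    (∀ P : EuclideanSpace ℝ (Fin n) →ₗ[ℝ] EuclideanSpace ℝ (Fin m), IsOrthoProj P →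
      ∀ (μ : Measure (EuclideanSpace ℝ (Fin n))) (F : Set (EuclideanSpace ℝ (Fin n))),
        IsFiniteMeasure μ → μ ≠ 0 → IsCompact F → μ Fᶜ = 0 →
        ∃ (u : EuclideanSpace ℝ (Fin m)) (c δ₀ : ℝ), 0 < c ∧ 0 < δ₀ ∧
          ∀ δ : ℝ, 0 < δ → δ < δ₀ →
            ENNReal.ofReal (c * δ ^ m) * μ F ≤
              μ (F ∩ (fun y => P y) ⁻¹' closedBall u δ)) :=
  stmt10_general

end
end
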